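/- For an arrow α set ζ_α = x_α x_{f(α)} x_{g(f(α))} and ξ_α = x_α x_{g(α)} x_{f(g(α))} in Λ. Then: (i) if α is a loop, then ζ_α = 0 and ξ_α = 0; (ii) if f(α) is a loop, then ζ_α = 0; (iii) if g(α) is a loop, then ξ_α = 0. -/

import Mathlib

/-- A triangulation quiver: a connected 2-regular quiver `(Q₀ = V, Q₁ = A, s, t)`
with at least two vertices, together with a permutation `f` of the arrows with
`t α = s (f α)` and `f³ = id`.  Two-regularity is encoded via the involution
`bar` on arrows (`bar α` is the unique arrow `≠ α` with the same source);
the in-degree condition follows from `f` being a bijection. -/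
structure TQ (V A : Type) [Fintype V] [DecidableEq V] [Fintype A] [DecidableEq A] where
  s : A → V
  t : A → V
  bar : A → A
  bar_ne : ∀ a, bar a ≠ a
  bar_invol : ∀ a, bar (bar a) = a
  s_bar : ∀ a, s (bar a) = s a
  bar_complete : ∀ a b, s b = s a → b = a ∨ b = bar a
  s_surj : ∀ i, ∃ a, s a = i
  f : Equiv.Perm A
  t_eq : ∀ a, t a = s (f a)
  f_cube : ∀ a, f (f (f a)) = a
  connected : ∀ i j : V, Relation.ReflTransGen
      (fun p q => ∃ e, (s e = p ∧ t e = q) ∨ (s e = q ∧ t e = p)) i j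
  two_vertices : 2 ≤ Fintype.card V

variable {V A : Type} [Fintype V] [DecidableEq V] [Fintype A] [DecidableEq A]

/-- The permutation `g` of arrows, `g α = \overline{f α}`. -/
def TQ.g (Q : TQ V A) (a : A) : A := Q.bar (Q.f a)

/-- `n α` is the length of the `g`-cycle of `α`. -/
noncomputable def TQ.n (Q : TQ V A) (a : A) : ℕ := Function.minimalPeriod Q.g a

/-- A loop is an arrow with equal source and target. -/
def TQ.IsLoop (Q : TQ V A) (a : A) : Prop := Q.s a = Q.t a

/-- A weight function: positive integers `m α`, constant on `g`-cycles. -/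
structure Weights (Q : TQ V A) where
  m : A → ℕ
  m_pos : ∀ a, 0 < m a
  m_g : ∀ a, m (Q.g a) = m a

/-- An arrow `α` is virtual if `m α * n α = 2`. -/
def Weights.Virtual {Q : TQ V A} (W : Weights Q) (a : A) : Prop := W.m a * Q.n a = 2

/-- The Assumption: (1) `m α n α ≥ 2` for all `α`; (2) `m α n α ≥ 3` whenever `ᾱ` is
virtual and not a loop; (3) `m α n α ≥ 4` whenever `ᾱ` is virtual and a loop. -/
def Weights.Assumption {Q : TQ V A} (W : Weights Q) : Prop :=
  (∀ a, 2 ≤ W.m a * Q.n a) ∧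
  (∀ a, W.Virtual (Q.bar a) → ¬ Q.IsLoop (Q.bar a) → 3 ≤ W.m a * Q.n a) ∧
  (∀ a, W.Virtual (Q.bar a) → Q.IsLoop (Q.bar a) → 4 ≤ W.m a * Q.n a)

/-- The data of an associative unital `K`-algebra `Λ` generated by pairwise orthogonal
idempotents `e i` summing to `1`, elements `x α ∈ e (s α) * Λ * e (t α)`, and nonzero
parameters `c α ∈ K` constant on `g`-cycles. -/
structure AlgData (Q : TQ V A) (W : Weights Q) (K : Type) [Field K]
    (Λ : Type) [Ring Λ] [Algebra K Λ] where
  e : V → Λ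
  x : A → Λ
  c : A → K
  c_ne : ∀ a, c a ≠ 0
  c_g : ∀ a, c (Q.g a) = c a
  e_orth : ∀ i j, e i * e j = if i = j then e i else 0
  e_sum : ∑ i, e i = 1
  x_sandwich : ∀ a, e (Q.s a) * x a * e (Q.t a) = x a

variable {Q : TQ V A} {W : Weights Q} {K : Type} [Field K] {Λ : Type} [Ring Λ] [Algebra K Λ]

/-- `B α = x_α x_{g α} ⋯ x_{g^{m_α n_α − 1} α}`, the full product along the `g`-cycle. -/
noncomputable def AlgData.B (D : AlgData Q W K Λ) (a : A) : Λ :=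
  ((List.range (W.m a * Q.n a)).map (fun k => D.x (Q.g^[k] a))).prod

/-- `A α = x_α x_{g α} ⋯ x_{g^{m_α n_α − 2} α}`, of length `m_α n_α − 1`. -/
noncomputable def AlgData.Apath (D : AlgData Q W K Λ) (a : A) : Λ :=
  ((List.range (W.m a * Q.n a - 1)).map (fun k => D.x (Q.g^[k] a))).prod

/-- The defining relations (R1), (R2), (R3) of a weighted surface algebra. -/
def AlgData.Rels (D : AlgData Q W K Λ) : Prop :=
  (∀ a, D.x a * D.x (Q.f a) = D.c (Q.bar a) • D.Apath (Q.bar a)) ∧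
  (∀ a, ¬ W.Virtual (Q.f (Q.f a)) →
      ¬ (W.Virtual (Q.f (Q.bar a)) ∧ W.m (Q.bar a) = 1 ∧ Q.n (Q.bar a) = 3) →
      D.x a * D.x (Q.f a) * D.x (Q.g (Q.f a)) = 0) ∧
  (∀ a, ¬ W.Virtual (Q.f a) →
      ¬ (W.Virtual (Q.f (Q.f a)) ∧ W.m (Q.f a) = 1 ∧ Q.n (Q.f a) = 3) →
      D.x a * D.x (Q.g a) * D.x (Q.f (Q.g a)) = 0)

/-- `J`: the two-sided ideal of `Λ` generated by the `x α`, as a `K`-submodule. -/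
def AlgData.J (D : AlgData Q W K Λ) : Submodule K Λ :=
  Submodule.span K {z | ∃ (a : A) (u v : Λ), z = u * D.x a * v}

/-!
A loop `α` has `f α = α` or `f α = ᾱ`, and `f` cannot fix both arrows leaving a vertex, since
that vertex would then be isolated. In each resulting configuration the `g`-cycles through the
`f`-orbit of `α` are rigid enough to exclude the exceptions in (R2) and (R3): the arrow that
would have to be virtual (its `g`-cycle of length at most 2) is not, and the exception with
`m = 1`, `n = 3` would make `f a` a virtual loop with `bar (f a) = g a` on a `g`-cycle with
`m * n = 3`, which the Assumption forbids.
-/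

namespace TQ

variable (Q : TQ V A)

theorem bar_injective : Function.Injective Q.bar :=
  Function.LeftInverse.injective Q.bar_invol

theorem g_injective : Function.Injective Q.g :=
  Q.bar_injective.comp Q.f.injective

theorem isLoop_iff {a : A} : Q.IsLoop a ↔ Q.f a = a ∨ Q.f a = Q.bar a := by
  rw [IsLoop, t_eq]
  constructor
  · exact fun h => Q.bar_complete a (Q.f a) h.symm
  · rintro (h | h) <;> rw [h]
    exact (Q.s_bar a).symm

theorem mem_periodicPts_g (a : A) : a ∈ Function.periodicPts Q.g := by
  let σ : Equiv.Perm A := Equiv.ofBijective Q.g Q.g_injective.bijective_of_finite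
  refine ⟨orderOf σ, orderOf_pos σ, ?_⟩
  change (σ ^ orderOf σ) a = a
  rw [pow_orderOf_eq_one, Equiv.Perm.one_apply]

theorem n_g (a : A) : Q.n (Q.g a) = Q.n a :=
  Function.minimalPeriod_apply (Q.mem_periodicPts_g a)

theorem g_iterate_n (a : A) : Q.g^[Q.n a] a = a :=
  Function.iterate_minimalPeriod

/-- If `f` fixes both arrows starting at a vertex, no arrow joins it to another vertex. -/
theorem f_bar_ne_bar_of_f_eq {a : A} (ha : Q.f a = a) : Q.f (Q.bar a) ≠ Q.bar a := by
  intro hb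
  have hstay : ∀ e, Q.s e = Q.s a ∨ Q.t e = Q.s a → Q.s e = Q.s a ∧ Q.t e = Q.s a := by
    intro e he
    have : e = a ∨ e = Q.bar a := by
      rcases he with he | he
      · exact Q.bar_complete a e he
      · rw [t_eq] at he
        rcases Q.bar_complete a _ he with h | h
        · exact .inl (Q.f.injective (h.trans ha.symm))
        · exact .inr (Q.f.injective (h.trans hb.symm))
    rcases this with rfl | rfl
    · exact ⟨rfl, by rw [t_eq, ha]⟩
    · exact ⟨Q.s_bar a, by rw [t_eq, hb, Q.s_bar]⟩
  obtain ⟨j, hj⟩ := Fintype.exists_ne_of_one_lt_card (by have := Q.two_vertices; omega) (Q.s a)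
  refine hj ?_
  clear hj
  induction Q.connected (Q.s a) j with
  | refl => rfl
  | tail _ hstep ih =>
    obtain ⟨e, ⟨hs, ht⟩ | ⟨hs, ht⟩⟩ := hstep
    · exact ht ▸ (hstay e (.inl (hs.trans ih))).2
    · exact hs ▸ (hstay e (.inr (ht.trans ih))).1

theorem g_g_f_f_ne_of_isLoop {α : A} (hl : Q.IsLoop α ∨ Q.IsLoop (Q.f α)) :
    Q.g (Q.g (Q.f (Q.f α))) ≠ Q.f (Q.f α) := by
  simp only [isLoop_iff] at hl
  grind [g, bar_invol, bar_ne, f_cube, f_bar_ne_bar_of_f_eq]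

theorem isLoop_f_bar_of_isLoop {α : A} (hl : Q.IsLoop α ∨ Q.IsLoop (Q.f α))
    (h3 : Q.g (Q.g (Q.g (Q.bar α))) = Q.bar α) (h2 : Q.g (Q.g (Q.f (Q.bar α))) = Q.f (Q.bar α)) :
    Q.IsLoop (Q.f (Q.bar α)) := by
  simp only [isLoop_iff] at hl ⊢
  grind [g, bar_invol, bar_ne, f_cube, f_bar_ne_bar_of_f_eq]

theorem g_g_f_ne_of_isLoop {α : A} (hl : Q.IsLoop α ∨ Q.IsLoop (Q.g α)) :
    Q.g (Q.g (Q.f α)) ≠ Q.f α := by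
  simp only [isLoop_iff] at hl
  grind [g, bar_invol, bar_ne, f_cube, f_bar_ne_bar_of_f_eq]

theorem isLoop_f_f_of_isLoop {α : A} (hl : Q.IsLoop α ∨ Q.IsLoop (Q.g α))
    (h3 : Q.g (Q.g (Q.g (Q.f α))) = Q.f α) (h2 : Q.g (Q.g (Q.f (Q.f α))) = Q.f (Q.f α)) :
    Q.IsLoop (Q.f (Q.f α)) := by
  simp only [isLoop_iff] at hl ⊢
  grind [g, bar_invol, bar_ne, f_cube, f_bar_ne_bar_of_f_eq]

end TQ

namespace Weights

variable {Q : TQ V A}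

theorem Virtual.g_g_eq {W : Weights Q} {a : A} (hv : W.Virtual a) : Q.g (Q.g a) = a :=
  Function.isPeriodicPt_iff_minimalPeriod_dvd.mpr (Dvd.intro_left _ hv)

/-- `bar (f a) = g a` lies on the `g`-cycle of `a`, so part (3) of the Assumption would give
`m a * n a ≥ 4`. -/
theorem Assumption.not_isLoop_f {W : Weights Q} (hA : W.Assumption) {a : A}
    (h3 : W.m a * Q.n a = 3) (hv : W.Virtual (Q.f a)) : ¬ Q.IsLoop (Q.f a) := by
  intro hl
  have hbar : Q.bar (Q.g a) = Q.f a := Q.bar_invol _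
  have h4 := hA.2.2 (Q.g a) (hbar ▸ hv) (hbar ▸ hl)
  rw [W.m_g, Q.n_g] at h4
  omega

end Weights

namespace AlgData

variable {Q : TQ V A} {W : Weights Q} (D : AlgData Q W K Λ)

theorem zeta_eq_zero (hA : W.Assumption) (hR : D.Rels) {α : A}
    (hl : Q.IsLoop α ∨ Q.IsLoop (Q.f α)) :
    D.x α * D.x (Q.f α) * D.x (Q.g (Q.f α)) = 0 := by
  refine hR.2.1 α (fun hv => Q.g_g_f_f_ne_of_isLoop hl hv.g_g_eq) ?_
  rintro ⟨hv, hm, hn⟩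
  have h3 : Q.g (Q.g (Q.g (Q.bar α))) = Q.bar α := by
    simpa [hn] using Q.g_iterate_n (Q.bar α)
  exact hA.not_isLoop_f (by rw [hm, hn]) hv (Q.isLoop_f_bar_of_isLoop hl h3 hv.g_g_eq)

theorem xi_eq_zero (hA : W.Assumption) (hR : D.Rels) {α : A}
    (hl : Q.IsLoop α ∨ Q.IsLoop (Q.g α)) :
    D.x α * D.x (Q.g α) * D.x (Q.f (Q.g α)) = 0 := by
  refine hR.2.2 α (fun hv => Q.g_g_f_ne_of_isLoop hl hv.g_g_eq) ?_
  rintro ⟨hv, hm, hn⟩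
  have h3 : Q.g (Q.g (Q.g (Q.f α))) = Q.f α := by
    simpa [hn] using Q.g_iterate_n (Q.f α)
  exact hA.not_isLoop_f (by rw [hm, hn]) hv (Q.isLoop_f_f_of_isLoop hl h3 hv.g_g_eq)

end AlgData

theorem stmt7_general (Q : TQ V A) (W : Weights Q) (hA : W.Assumption)
    {K : Type} [Field K] {Λ : Type} [Ring Λ] [Algebra K Λ]
    (D : AlgData Q W K Λ) (hR : D.Rels) (α : A) :
    (Q.IsLoop α →
      D.x α * D.x (Q.f α) * D.x (Q.g (Q.f α)) = 0 ∧
      D.x α * D.x (Q.g α) * D.x (Q.f (Q.g α)) = 0) ∧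
    (Q.IsLoop (Q.f α) → D.x α * D.x (Q.f α) * D.x (Q.g (Q.f α)) = 0) ∧
    (Q.IsLoop (Q.g α) → D.x α * D.x (Q.g α) * D.x (Q.f (Q.g α)) = 0) :=
  ⟨fun h => ⟨D.zeta_eq_zero hA hR (.inl h), D.xi_eq_zero hA hR (.inl h)⟩,
    fun h => D.zeta_eq_zero hA hR (.inr h), fun h => D.xi_eq_zero hA hR (.inr h)⟩

/-- (i) if `α` is a loop then `ζ_α = 0 = ξ_α`; (ii) if `f α` is a loop
then `ζ_α = 0`; (iii) if `g α` is a loop then `ξ_α = 0`. -/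
theorem stmt7 (Q : TQ V A) (W : Weights Q) (h3 : 3 ≤ Fintype.card V) (hA : W.Assumption)
    {K : Type} [Field K] {Λ : Type} [Ring Λ] [Algebra K Λ]
    (D : AlgData Q W K Λ) (hR : D.Rels) (α : A) :
    (Q.IsLoop α →
      D.x α * D.x (Q.f α) * D.x (Q.g (Q.f α)) = 0 ∧
      D.x α * D.x (Q.g α) * D.x (Q.f (Q.g α)) = 0) ∧
    (Q.IsLoop (Q.f α) → D.x α * D.x (Q.f α) * D.x (Q.g (Q.f α)) = 0) ∧
    (Q.IsLoop (Q.g α) → D.x α * D.x (Q.g α) * D.x (Q.f (Q.g α)) = 0) :=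
  stmt7_general Q W hA D hR α
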